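/- arXiv:1803.05093 — 4 statements merged into one kernel-verified Lean document; each statement's English description precedes it below -/
import Mathlib

section
/- The spanning subgraph N of G whose edge set is the set of negative edges is a spanning forest of G: N contains no cycle, and two vertices of V are connected in N if and only if they are connected in G. -/
open SimpleGraph

/-- The function value of an edge: the larger of the values of its two endpoints. -/
noncomputable def fbar {V : Type*} (f : V → ℝ) : Sym2 V → ℝ :=
  Sym2.lift ⟨fun u w => max (f u) (f w), fun u w => max_comm (f u) (f w)⟩

/-- The spanning subgraph `G_{≺e}` of `G` whose edges are exactly the edges `e'` of `G`
with `e' ≺ e`. -/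
def Gbelow {V : Type*} (G : SimpleGraph V) (lt : Sym2 V → Sym2 V → Prop) (e : Sym2 V) :
    SimpleGraph V :=
  SimpleGraph.fromEdgeSet {e' | e' ∈ G.edgeSet ∧ lt e' e}

/-- An edge `e` of `G` is negative if its two endpoints lie in different connected
components of `G_{≺e}`. -/
def IsNegEdge {V : Type*} (G : SimpleGraph V) (lt : Sym2 V → Sym2 V → Prop) (e : Sym2 V) :
    Prop :=
  e ∈ G.edgeSet ∧ ∃ u w : V, e = s(u, w) ∧ ¬ (Gbelow G lt e).Reachable u w

/-- An edge `e` of `G` is positive if it is not negative. -/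
def IsPosEdge {V : Type*} (G : SimpleGraph V) (lt : Sym2 V → Sym2 V → Prop) (e : Sym2 V) :
    Prop :=
  e ∈ G.edgeSet ∧ ¬ IsNegEdge G lt e

/-- The `f`-minimizing vertex of the connected component of `u` in the graph `H`. -/
noncomputable def compMin {V : Type*} [Fintype V] (f : V → ℝ) (H : SimpleGraph V) (u : V) :
    V := by
  classical
  exact Classical.choose (Finset.exists_min_image
    (Finset.univ.filter fun v => H.Reachable u v) f
    ⟨u, Finset.mem_filter.mpr ⟨Finset.mem_univ u, SimpleGraph.Reachable.refl u⟩⟩)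

/-- The vertex `m(e)` paired with a negative edge `e` by the elder rule: of the two
`f`-minimizing vertices of the components (in `G_{≺e}`) of the endpoints of `e`, the one
with the larger `f`-value. -/
noncomputable def pairVert {V : Type*} [Fintype V] (G : SimpleGraph V) (f : V → ℝ)
    (hf : Function.Injective f) (lt : Sym2 V → Sym2 V → Prop) (e : Sym2 V) : V :=
  Sym2.lift ⟨fun u w =>
      if f (compMin f (Gbelow G lt e) u) < f (compMin f (Gbelow G lt e) w)
      then compMin f (Gbelow G lt e) w
      else compMin f (Gbelow G lt e) u, by
    intro u w
    dsimp only
    rcases lt_trichotomy (f (compMin f (Gbelow G lt e) u)) (f (compMin f (Gbelow G lt e) w))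
      with h | h | h
    · rw [if_pos h, if_neg (lt_asymm h)]
    · rw [hf h]
    · rw [if_neg (lt_asymm h), if_pos h]⟩ e

/-- The persistence of a negative edge `e`: `f̄(e) - f(m(e))`. -/
noncomputable def persE {V : Type*} [Fintype V] (G : SimpleGraph V) (f : V → ℝ)
    (hf : Function.Injective f) (lt : Sym2 V → Sym2 V → Prop) (e : Sym2 V) : ℝ :=
  fbar f e - f (pairVert G f hf lt e)

namespace SimpleGraph

variable {V : Type*}

theorem Reachable.of_forall_adj_reachable {G H : SimpleGraph V}
    (h : ∀ a b, G.Adj a b → H.Reachable a b) {u w : V} (huw : G.Reachable u w) :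
    H.Reachable u w := by
  obtain ⟨p⟩ := huw
  induction p with
  | nil => rfl
  | cons hadj _ ih => exact (h _ _ hadj).trans ih

theorem Walk.IsCycle.reachable_of_edges_subset {H K : SimpleGraph V} {x u w : V}
    {c : H.Walk x x} (hc : c.IsCycle) (he : s(u, w) ∈ c.edges)
    (hK : ∀ e ∈ c.edges, e ≠ s(u, w) → e ∈ K.edgeSet) : K.Reachable u w := by
  let M := fromEdgeSet {e | e ∈ c.edges}
  have hcM : ∀ e ∈ c.edges, e ∈ M.edgeSet := fun e he' => by
    rw [edgeSet_fromEdgeSet]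
    exact ⟨he', H.not_isDiag_of_mem_edgeSet (c.edges_subset_edgeSet he')⟩
  have hreach : (M.deleteEdges {s(u, w)}).Reachable u w :=
    (adj_and_reachable_delete_edges_iff_exists_cycle.mpr
      ⟨x, c.transfer M hcM, hc.transfer hcM, by rwa [Walk.edges_transfer]⟩).2
  refine hreach.mono fun a b hab => ?_
  rw [deleteEdges_adj, fromEdgeSet_adj] at hab
  exact hK _ hab.1.1 hab.2

end SimpleGraph

open SimpleGraph

section NegativeEdges

variable {V : Type*} {G : SimpleGraph V} {lt : Sym2 V → Sym2 V → Prop}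

def negEdgeGraph (G : SimpleGraph V) (lt : Sym2 V → Sym2 V → Prop) : SimpleGraph V :=
  fromEdgeSet {e | IsNegEdge G lt e}

theorem gbelow_adj {e : Sym2 V} {a b : V} :
    (Gbelow G lt e).Adj a b ↔ G.Adj a b ∧ lt s(a, b) e := by
  simp only [Gbelow, fromEdgeSet_adj, Set.mem_ofPred_eq, mem_edgeSet]
  exact ⟨fun h => h.1, fun h => ⟨h, h.1.ne⟩⟩

theorem edgeSet_negEdgeGraph : (negEdgeGraph G lt).edgeSet = {e | IsNegEdge G lt e} := by
  rw [negEdgeGraph, edgeSet_fromEdgeSet, sdiff_eq_left, Set.disjoint_left]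
  exact fun e hneg => G.not_isDiag_of_mem_edgeSet hneg.1

theorem negEdgeGraph_adj {a b : V} : (negEdgeGraph G lt).Adj a b ↔ IsNegEdge G lt s(a, b) := by
  rw [← mem_edgeSet, edgeSet_negEdgeGraph, Set.mem_ofPred_eq]

theorem negEdgeGraph_le : negEdgeGraph G lt ≤ G := fun _ _ h =>
  (negEdgeGraph_adj.mp h).1

theorem wellFounded_edgeSet [Finite V] {r : Sym2 V → Sym2 V → Prop}
    (hirrefl : ∀ e ∈ G.edgeSet, ¬ r e e)
    (htrans : ∀ e₁ ∈ G.edgeSet, ∀ e₂ ∈ G.edgeSet, ∀ e₃ ∈ G.edgeSet,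
      r e₁ e₂ → r e₂ e₃ → r e₁ e₃) :
    WellFounded fun a b : G.edgeSet => r a b := by
  have : IsTrans G.edgeSet fun a b => r a b :=
    ⟨fun a b c => htrans a a.2 b b.2 c c.2⟩
  have : Std.Irrefl fun a b : G.edgeSet => r a b := ⟨fun a => hirrefl a a.2⟩
  exact Finite.wellFounded_of_trans_of_irrefl _

variable [Finite V] (hirrefl : ∀ e ∈ G.edgeSet, ¬ lt e e)
  (htrans : ∀ e₁ ∈ G.edgeSet, ∀ e₂ ∈ G.edgeSet, ∀ e₃ ∈ G.edgeSet,
    lt e₁ e₂ → lt e₂ e₃ → lt e₁ e₃)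
include hirrefl htrans

theorem exists_forall_lt_of_subset_edgeSet
    (htotal : ∀ e₁ ∈ G.edgeSet, ∀ e₂ ∈ G.edgeSet, e₁ ≠ e₂ → lt e₁ e₂ ∨ lt e₂ e₁)
    {s : Set (Sym2 V)} (hs : s ⊆ G.edgeSet) (hne : s.Nonempty) :
    ∃ e ∈ s, ∀ e' ∈ s, e' ≠ e → lt e' e := by
  have hwf := wellFounded_edgeSet (r := flip lt) hirrefl
    fun a ha b hb c hc hab hbc => htrans c hc b hb a ha hbc hab
  obtain ⟨e₀, he₀⟩ := hne
  obtain ⟨e, he, hmax⟩ := hwf.has_min {e | e.1 ∈ s} ⟨⟨e₀, hs he₀⟩, he₀⟩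
  exact ⟨e, he, fun e' he' hne' =>
    (htotal e' (hs he') e e.2 hne').resolve_right (hmax ⟨e', hs he'⟩ he')⟩

/-- Induction along `≺`: the endpoints of a positive edge `e` are joined in `G_{≺e}`, and each
edge of `G_{≺e}` has its endpoints joined by negative edges. -/
theorem reachable_negEdgeGraph_of_adj {u w : V} (h : G.Adj u w) :
    (negEdgeGraph G lt).Reachable u w := by
  suffices H : ∀ e : G.edgeSet, ∀ u w, e.1 = s(u, w) → (negEdgeGraph G lt).Reachable u w from
    H ⟨s(u, w), h⟩ u w rfl
  intro e
  induction e using (wellFounded_edgeSet hirrefl htrans).induction with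
  | _ e ih =>
    intro u w hew
    by_cases hneg : IsNegEdge G lt s(u, w)
    · exact (negEdgeGraph_adj.mpr hneg).reachable
    have hbelow : (Gbelow G lt e).Reachable u w := by
      by_contra hnr
      exact hneg ⟨hew ▸ e.2, u, w, rfl, hew ▸ hnr⟩
    refine hbelow.of_forall_adj_reachable fun a b hab => ?_
    obtain ⟨hadj, hlt⟩ := gbelow_adj.mp hab
    exact ih ⟨s(a, b), hadj⟩ hlt a b rfl

theorem reachable_negEdgeGraph_iff {u w : V} :
    (negEdgeGraph G lt).Reachable u w ↔ G.Reachable u w :=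
  ⟨fun h => h.mono negEdgeGraph_le, fun h =>
    h.of_forall_adj_reachable fun _ _ => reachable_negEdgeGraph_of_adj hirrefl htrans⟩

/-- The `≺`-largest edge `e` of a cycle of negative edges would have its endpoints joined in
`G_{≺e}` by the rest of the cycle. -/
theorem isAcyclic_negEdgeGraph
    (htotal : ∀ e₁ ∈ G.edgeSet, ∀ e₂ ∈ G.edgeSet, e₁ ≠ e₂ → lt e₁ e₂ ∨ lt e₂ e₁) :
    (negEdgeGraph G lt).IsAcyclic := by
  intro x c hc
  have hneg : ∀ e ∈ c.edges, IsNegEdge G lt e := by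
    simpa only [edgeSet_negEdgeGraph, Set.mem_ofPred_eq] using c.edges_subset_edgeSet
  obtain ⟨e, he, hmax⟩ := exists_forall_lt_of_subset_edgeSet hirrefl htrans htotal
    (s := {e | e ∈ c.edges}) (fun e he => (hneg e he).1)
    ⟨_, List.head_mem (Walk.edges_eq_nil.not.mpr hc.not_nil)⟩
  obtain ⟨-, u, w, rfl, hnr⟩ := hneg e he
  refine hnr (hc.reachable_of_edges_subset he fun e' he' hne' => ?_)
  rw [Gbelow, edgeSet_fromEdgeSet]
  exact ⟨⟨(hneg e' he').1, hmax e' he' hne'⟩,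
    (negEdgeGraph G lt).not_isDiag_of_mem_edgeSet (c.edges_subset_edgeSet he')⟩

end NegativeEdges

theorem negative_edges_spanning_forest_general {V : Type*} [Fintype V]
    (G : SimpleGraph V)
    (lt : Sym2 V → Sym2 V → Prop)
    (hlt_irrefl : ∀ e ∈ G.edgeSet, ¬ lt e e)
    (hlt_trans : ∀ e₁ ∈ G.edgeSet, ∀ e₂ ∈ G.edgeSet, ∀ e₃ ∈ G.edgeSet,
      lt e₁ e₂ → lt e₂ e₃ → lt e₁ e₃)
    (hlt_total : ∀ e₁ ∈ G.edgeSet, ∀ e₂ ∈ G.edgeSet, e₁ ≠ e₂ → lt e₁ e₂ ∨ lt e₂ e₁) :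
    (SimpleGraph.fromEdgeSet {e | IsNegEdge G lt e}).IsAcyclic ∧
    ∀ u w : V,
      (SimpleGraph.fromEdgeSet {e | IsNegEdge G lt e}).Reachable u w ↔ G.Reachable u w :=
  ⟨isAcyclic_negEdgeGraph hlt_irrefl hlt_trans hlt_total,
    fun _ _ => reachable_negEdgeGraph_iff hlt_irrefl hlt_trans⟩

/-- The spanning subgraph `N` of `G` whose edge set is the set of negative
edges is a spanning forest of `G`: `N` contains no cycle, and two vertices are connected in
`N` iff they are connected in `G`. -/
theorem negative_edges_spanning_forest {V : Type*} [Fintype V]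
    (G : SimpleGraph V) (f : V → ℝ) (hf : Function.Injective f)
    (lt : Sym2 V → Sym2 V → Prop)
    (hlt_irrefl : ∀ e ∈ G.edgeSet, ¬ lt e e)
    (hlt_trans : ∀ e₁ ∈ G.edgeSet, ∀ e₂ ∈ G.edgeSet, ∀ e₃ ∈ G.edgeSet,
      lt e₁ e₂ → lt e₂ e₃ → lt e₁ e₃)
    (hlt_total : ∀ e₁ ∈ G.edgeSet, ∀ e₂ ∈ G.edgeSet, e₁ ≠ e₂ → lt e₁ e₂ ∨ lt e₂ e₁)
    (hlt_refine : ∀ e₁ ∈ G.edgeSet, ∀ e₂ ∈ G.edgeSet, fbar f e₁ < fbar f e₂ → lt e₁ e₂) :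
    (SimpleGraph.fromEdgeSet {e | IsNegEdge G lt e}).IsAcyclic ∧
    ∀ u w : V,
      (SimpleGraph.fromEdgeSet {e | IsNegEdge G lt e}).Reachable u w ↔ G.Reachable u w :=
  negative_edges_spanning_forest_general G lt hlt_irrefl hlt_trans hlt_total
end

section
/- The elder-rule assignment e ↦ m(e), sending each negative edge to its paired vertex, is a bijection from the set of negative edges of G onto the set of vertices v ∈ V that are not the f-minimizing vertex of their connected component in G. -/
open SimpleGraph

/-!
A vertex `v` that is not the minimum of its component is the elder-rule partner of the first
edge `e` (in the order `≺`) after whose insertion `v` is joined to a smaller vertex: before `e`,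
`v` is the minimum of its component, and `e` merges that component with one containing a smaller
minimum. Conversely the partner `m(e)` of a negative edge is the minimum of its component in
`G_{≺e}`, but is joined to a smaller vertex once `e` is inserted; since the graphs `G_{≺e}` grow
with `e`, this singles out `e`, whence injectivity.
-/

theorem Set.Finite.exists_rel_minimal {α : Type*} {r : α → α → Prop} {s : Set α}
    (hs : s.Finite) (hne : s.Nonempty) (hirr : ∀ a ∈ s, ¬ r a a)
    (htrans : ∀ a ∈ s, ∀ b ∈ s, ∀ c ∈ s, r a b → r b c → r a c) :
    ∃ m ∈ s, ∀ a ∈ s, ¬ r a m := by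
  let r' : s → s → Prop := fun a b => r a b
  have : IsTrans s r' := ⟨fun a b c => htrans _ a.2 _ b.2 _ c.2⟩
  have : Std.Irrefl r' := ⟨fun a => hirr _ a.2⟩
  have := hs.to_subtype
  obtain ⟨m, -, hm⟩ := (Finite.wellFounded_of_trans_of_irrefl r').has_min Set.univ
    ⟨⟨_, hne.some_mem⟩, trivial⟩
  exact ⟨m, m.2, fun a ha hr => hm ⟨a, ha⟩ trivial hr⟩

theorem SimpleGraph.Reachable.cases_sup_edge {V : Type*} {H : SimpleGraph V} {a b x y : V}
    (h : (H ⊔ edge a b).Reachable x y) :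
    H.Reachable x y ∨ H.Reachable x a ∧ H.Reachable b y ∨ H.Reachable x b ∧ H.Reachable a y := by
  obtain ⟨p⟩ := h
  induction p with
  | nil => exact Or.inl .rfl
  | @cons x z y hxz _ ih =>
    rcases hxz with hxz | hxz
    · have hxz := hxz.reachable
      rcases ih with h | ⟨h₁, h₂⟩ | ⟨h₁, h₂⟩
      exacts [Or.inl (hxz.trans h), Or.inr (Or.inl ⟨hxz.trans h₁, h₂⟩),
        Or.inr (Or.inr ⟨hxz.trans h₁, h₂⟩)]
    · rcases ((edge_adj ..).1 hxz).1 with ⟨rfl, rfl⟩ | ⟨rfl, rfl⟩ <;>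
        rcases ih with h | ⟨h₁, h₂⟩ | ⟨h₁, h₂⟩
      exacts [Or.inr (Or.inl ⟨.rfl, h⟩), Or.inl (h₁.symm.trans h₂), Or.inl h₂,
        Or.inr (Or.inr ⟨.rfl, h⟩), Or.inl h₂, Or.inl (h₁.symm.trans h₂)]

section ElderRule

variable {V : Type*} {G : SimpleGraph V} {lt : Sym2 V → Sym2 V → Prop} {e e₁ e₂ : Sym2 V}

/-- The spanning subgraph `G_{≼e}`. -/
def Gupto (G : SimpleGraph V) (lt : Sym2 V → Sym2 V → Prop) (e : Sym2 V) : SimpleGraph V :=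
  Gbelow G lt e ⊔ fromEdgeSet {e}

lemma Gbelow_le : Gbelow G lt e ≤ G := fun _ _ h => h.1.1

lemma Gbelow_le_Gupto : Gbelow G lt e ≤ Gupto G lt e := le_sup_left

lemma Gupto_le (he : e ∈ G.edgeSet) : Gupto G lt e ≤ G :=
  sup_le Gbelow_le ((fromEdgeSet_le _).2 fun _ h => (Set.mem_singleton_iff.1 h.1) ▸ he)

lemma Gupto_adj {a b : V} (h : s(a, b) ∈ G.edgeSet) : (Gupto G lt s(a, b)).Adj a b :=
  Or.inr ((edge_adj ..).2 ⟨Or.inl ⟨rfl, rfl⟩, (G.mem_edgeSet.1 h).ne⟩)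

lemma Gupto_le_Gbelow
    (htrans : ∀ e₁ ∈ G.edgeSet, ∀ e₂ ∈ G.edgeSet, ∀ e₃ ∈ G.edgeSet,
      lt e₁ e₂ → lt e₂ e₃ → lt e₁ e₃)
    (he₁ : e₁ ∈ G.edgeSet) (he₂ : e₂ ∈ G.edgeSet) (h : lt e₁ e₂) :
    Gupto G lt e₁ ≤ Gbelow G lt e₂ := by
  refine sup_le (fun u w huw => ⟨⟨huw.1.1, htrans _ huw.1.1 _ he₁ _ he₂ huw.1.2 h⟩, huw.2⟩) ?_
  exact fromEdgeSet_mono (Set.singleton_subset_iff.2 ⟨he₁, h⟩)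

lemma mem_edgeSet_Gupto {e' : Sym2 V} (he' : e' ∈ G.edgeSet) (h : lt e' e ∨ e' = e) :
    e' ∈ (Gupto G lt e).edgeSet := by
  rw [Gupto, edgeSet_sup, Gbelow, edgeSet_fromEdgeSet, edgeSet_fromEdgeSet]
  rcases h with h | rfl
  exacts [Or.inl ⟨⟨he', h⟩, G.not_isDiag_of_mem_edgeSet he'⟩,
    Or.inr ⟨rfl, G.not_isDiag_of_mem_edgeSet he'⟩]

/-- A walk runs in `G_{≼em}` for the `≺`-largest edge `em` along it. -/
lemma SimpleGraph.Walk.exists_mem_edges_reachable_Gupto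
    (hirr : ∀ e ∈ G.edgeSet, ¬ lt e e)
    (htrans : ∀ e₁ ∈ G.edgeSet, ∀ e₂ ∈ G.edgeSet, ∀ e₃ ∈ G.edgeSet,
      lt e₁ e₂ → lt e₂ e₃ → lt e₁ e₃)
    (htotal : ∀ e₁ ∈ G.edgeSet, ∀ e₂ ∈ G.edgeSet, e₁ ≠ e₂ → lt e₁ e₂ ∨ lt e₂ e₁)
    {K : SimpleGraph V} (hK : K ≤ G) {v y : V} (p : K.Walk v y) (hne : v ≠ y) :
    ∃ em ∈ p.edges, (Gupto G lt em).Reachable v y := by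
  have hG : ∀ e ∈ p.edges, e ∈ G.edgeSet :=
    fun e he => edgeSet_subset_edgeSet.2 hK (p.edges_subset_edgeSet he)
  have hp : {e | e ∈ p.edges}.Nonempty :=
    List.exists_mem_of_ne_nil _ fun h => hne (edges_eq_nil.1 h).eq
  obtain ⟨em, hem, hmax⟩ := (List.finite_toSet p.edges).exists_rel_minimal (r := flip lt) hp
    (fun e he => hirr e (hG e he))
    (fun a ha b hb c hc hab hbc => htrans c (hG c hc) b (hG b hb) a (hG a ha) hbc hab)
  refine ⟨em, hem, ⟨p.transfer _ fun e' he' => mem_edgeSet_Gupto (hG e' he') ?_⟩⟩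
  by_cases h : e' = em
  · exact Or.inr h
  · exact Or.inl ((htotal e' (hG e' he') em (hG em hem) h).resolve_right (hmax e' he'))

variable [Fintype V] {f : V → ℝ} {H : SimpleGraph V} {u v w : V}

lemma compMin_spec (f : V → ℝ) (H : SimpleGraph V) (u : V) :
    H.Reachable u (compMin f H u) ∧ ∀ v, H.Reachable u v → f (compMin f H u) ≤ f v := by
  classical
  have h := Classical.choose_spec (Finset.exists_min_image
    (Finset.univ.filter fun v => H.Reachable u v) f
    ⟨u, Finset.mem_filter.mpr ⟨Finset.mem_univ u, Reachable.refl u⟩⟩)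
  exact ⟨(Finset.mem_filter.1 h.1).2,
    fun v hv => h.2 v (Finset.mem_filter.2 ⟨Finset.mem_univ v, hv⟩)⟩

lemma reachable_compMin (f : V → ℝ) (H : SimpleGraph V) (u : V) :
    H.Reachable u (compMin f H u) :=
  (compMin_spec f H u).1

lemma compMin_le (h : H.Reachable u v) : f (compMin f H u) ≤ f v :=
  (compMin_spec f H u).2 v h

lemma compMin_le_of_reachable_compMin (h : H.Reachable (compMin f H u) v) :
    f (compMin f H u) ≤ f v :=
  compMin_le ((reachable_compMin f H u).trans h)

lemma compMin_eq_of_reachable (hf : Function.Injective f) (h : H.Reachable u w) :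
    compMin f H u = compMin f H w :=
  hf (le_antisymm (compMin_le (h.trans (reachable_compMin f H w)))
    (compMin_le (h.symm.trans (reachable_compMin f H u))))

lemma compMin_eq_self (hf : Function.Injective f) (h : ∀ v, H.Reachable u v → f u ≤ f v) :
    compMin f H u = u :=
  hf (le_antisymm (compMin_le .rfl) (h _ (reachable_compMin f H u)))

variable (hf : Function.Injective f)

lemma pairVert_mk_of_lt {a b : V}
    (h : f (compMin f (Gbelow G lt s(a, b)) a) < f (compMin f (Gbelow G lt s(a, b)) b)) :
    pairVert G f hf lt s(a, b) = compMin f (Gbelow G lt s(a, b)) b :=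
  if_pos h

lemma pairVert_mk_of_gt {a b : V}
    (h : f (compMin f (Gbelow G lt s(a, b)) b) < f (compMin f (Gbelow G lt s(a, b)) a)) :
    pairVert G f hf lt s(a, b) = compMin f (Gbelow G lt s(a, b)) a := by
  rw [Sym2.eq_swap] at h ⊢
  exact pairVert_mk_of_lt hf h

lemma exists_pairVert_eq_compMin (e : Sym2 V) :
    ∃ x, pairVert G f hf lt e = compMin f (Gbelow G lt e) x := by
  induction e using Sym2.ind with
  | h a b =>
    by_cases h : f (compMin f (Gbelow G lt s(a, b)) a) < f (compMin f (Gbelow G lt s(a, b)) b)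
    · exact ⟨b, if_pos h⟩
    · exact ⟨a, if_neg h⟩

lemma pairVert_le_of_reachable {y : V} (h : (Gbelow G lt e).Reachable (pairVert G f hf lt e) y) :
    f (pairVert G f hf lt e) ≤ f y := by
  obtain ⟨x, hx⟩ := exists_pairVert_eq_compMin hf e
  rw [hx] at h ⊢
  exact compMin_le_of_reachable_compMin h

lemma exists_reachable_lt_pairVert_mk {a b : V} (hab : s(a, b) ∈ G.edgeSet)
    (h : f (compMin f (Gbelow G lt s(a, b)) a) < f (compMin f (Gbelow G lt s(a, b)) b)) :
    ∃ y, (Gupto G lt s(a, b)).Reachable (pairVert G f hf lt s(a, b)) y ∧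
      f y < f (pairVert G f hf lt s(a, b)) := by
  rw [pairVert_mk_of_lt hf h]
  have hb := (reachable_compMin f (Gbelow G lt s(a, b)) b).mono Gbelow_le_Gupto
  have ha := (reachable_compMin f (Gbelow G lt s(a, b)) a).mono Gbelow_le_Gupto
  exact ⟨_, hb.symm.trans ((Gupto_adj hab).symm.reachable.trans ha), h⟩

lemma IsNegEdge.exists_reachable_lt_pairVert (he : IsNegEdge G lt e) :
    ∃ y, (Gupto G lt e).Reachable (pairVert G f hf lt e) y ∧ f y < f (pairVert G f hf lt e) := by
  obtain ⟨heG, a, b, rfl, hab⟩ := he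
  have hne : f (compMin f (Gbelow G lt s(a, b)) a) ≠ f (compMin f (Gbelow G lt s(a, b)) b) :=
    fun h => hab ((reachable_compMin f _ a).trans (hf h ▸ (reachable_compMin f _ b).symm))
  rcases hne.lt_or_gt with h | h
  · exact exists_reachable_lt_pairVert_mk hf heG h
  · rw [Sym2.eq_swap] at heG h ⊢
    exact exists_reachable_lt_pairVert_mk hf heG h

lemma IsNegEdge.pairVert_ne_of_lt
    (htrans : ∀ e₁ ∈ G.edgeSet, ∀ e₂ ∈ G.edgeSet, ∀ e₃ ∈ G.edgeSet,
      lt e₁ e₂ → lt e₂ e₃ → lt e₁ e₃)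
    (he₁ : IsNegEdge G lt e₁) (he₂ : e₂ ∈ G.edgeSet) (h : lt e₁ e₂) :
    pairVert G f hf lt e₁ ≠ pairVert G f hf lt e₂ := by
  intro heq
  obtain ⟨y, hy, hfy⟩ := he₁.exists_reachable_lt_pairVert hf
  rw [heq] at hy hfy
  exact (pairVert_le_of_reachable hf (hy.mono (Gupto_le_Gbelow htrans he₁.1 he₂ h))).not_gt hfy

lemma isNegEdge_and_pairVert_eq {a b y : V} (he : s(a, b) ∈ G.edgeSet)
    (hmin : ∀ z, (Gbelow G lt s(a, b)).Reachable v z → f v ≤ f z)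
    (hy : (Gupto G lt s(a, b)).Reachable v y) (hfy : f y < f v) :
    IsNegEdge G lt s(a, b) ∧ pairVert G f hf lt s(a, b) = v := by
  have hvy : ¬ (Gbelow G lt s(a, b)).Reachable v y := fun h => (hmin y h).not_gt hfy
  have hv := compMin_eq_self hf hmin
  rcases Reachable.cases_sup_edge hy with h | ⟨hva, hby⟩ | ⟨hvb, hay⟩
  · exact absurd h hvy
  · refine ⟨⟨he, a, b, rfl, fun hab => hvy (hva.trans (hab.trans hby))⟩, ?_⟩
    have ha : compMin f (Gbelow G lt s(a, b)) a = v := (compMin_eq_of_reachable hf hva).symm.trans hv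
    rw [pairVert_mk_of_gt hf (ha ▸ (compMin_le hby).trans_lt hfy), ha]
  · refine ⟨⟨he, a, b, rfl, fun hab => hvy (hvb.trans (hab.symm.trans hay))⟩, ?_⟩
    have hb : compMin f (Gbelow G lt s(a, b)) b = v := (compMin_eq_of_reachable hf hvb).symm.trans hv
    rw [pairVert_mk_of_lt hf (hb ▸ (compMin_le hay).trans_lt hfy), hb]

lemma mapsTo_pairVert :
    Set.MapsTo (pairVert G f hf lt) {e | IsNegEdge G lt e}
      {v | ∃ u, G.Reachable v u ∧ f u < f v} := fun _ he =>
  let ⟨y, hy, hfy⟩ := IsNegEdge.exists_reachable_lt_pairVert hf he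
  ⟨y, hy.mono (Gupto_le he.1), hfy⟩

lemma injOn_pairVert
    (htrans : ∀ e₁ ∈ G.edgeSet, ∀ e₂ ∈ G.edgeSet, ∀ e₃ ∈ G.edgeSet,
      lt e₁ e₂ → lt e₂ e₃ → lt e₁ e₃)
    (htotal : ∀ e₁ ∈ G.edgeSet, ∀ e₂ ∈ G.edgeSet, e₁ ≠ e₂ → lt e₁ e₂ ∨ lt e₂ e₁) :
    Set.InjOn (pairVert G f hf lt) {e | IsNegEdge G lt e} := by
  intro e₁ he₁ e₂ he₂ heq
  by_contra hne
  rcases htotal e₁ he₁.1 e₂ he₂.1 hne with h | h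
  exacts [he₁.pairVert_ne_of_lt hf htrans he₂.1 h heq,
    he₂.pairVert_ne_of_lt hf htrans he₁.1 h heq.symm]

lemma surjOn_pairVert
    (hirr : ∀ e ∈ G.edgeSet, ¬ lt e e)
    (htrans : ∀ e₁ ∈ G.edgeSet, ∀ e₂ ∈ G.edgeSet, ∀ e₃ ∈ G.edgeSet,
      lt e₁ e₂ → lt e₂ e₃ → lt e₁ e₃)
    (htotal : ∀ e₁ ∈ G.edgeSet, ∀ e₂ ∈ G.edgeSet, e₁ ≠ e₂ → lt e₁ e₂ ∨ lt e₂ e₁) :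
    Set.SurjOn (pairVert G f hf lt) {e | IsNegEdge G lt e}
      {v | ∃ u, G.Reachable v u ∧ f u < f v} := by
  rintro v ⟨u, ⟨p⟩, hu⟩
  let S := {e | e ∈ G.edgeSet ∧ ∃ y, (Gupto G lt e).Reachable v y ∧ f y < f v}
  have hS : S.Nonempty := by
    obtain ⟨e, he, hr⟩ := p.exists_mem_edges_reachable_Gupto hirr htrans htotal le_rfl
      (ne_of_apply_ne f hu.ne')
    exact ⟨e, p.edges_subset_edgeSet he, u, hr, hu⟩
  obtain ⟨e, ⟨heG, y, hy, hfy⟩, hfirst⟩ := S.toFinite.exists_rel_minimal hS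
    (fun e he => hirr e he.1) (fun a ha b hb c hc => htrans a ha.1 b hb.1 c hc.1)
  have hmin : ∀ z, (Gbelow G lt e).Reachable v z → f v ≤ f z := by
    rintro z ⟨q⟩
    by_contra! hz
    obtain ⟨e', he', hr⟩ := q.exists_mem_edges_reachable_Gupto hirr htrans htotal Gbelow_le
      (ne_of_apply_ne f hz.ne')
    have he'e := q.edges_subset_edgeSet he'
    rw [Gbelow, edgeSet_fromEdgeSet] at he'e
    exact hfirst e' ⟨he'e.1.1, z, hr, hz⟩ he'e.1.2
  induction e using Sym2.ind with
  | h a b =>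
    obtain ⟨hneg, hpair⟩ := isNegEdge_and_pairVert_eq hf heG hmin hy hfy
    exact ⟨_, hneg, hpair⟩

end ElderRule

theorem elder_rule_bijection_general {V : Type*} [Fintype V]
    (G : SimpleGraph V) (f : V → ℝ) (hf : Function.Injective f)
    (lt : Sym2 V → Sym2 V → Prop)
    (hlt_irrefl : ∀ e ∈ G.edgeSet, ¬ lt e e)
    (hlt_trans : ∀ e₁ ∈ G.edgeSet, ∀ e₂ ∈ G.edgeSet, ∀ e₃ ∈ G.edgeSet,
      lt e₁ e₂ → lt e₂ e₃ → lt e₁ e₃)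
    (hlt_total : ∀ e₁ ∈ G.edgeSet, ∀ e₂ ∈ G.edgeSet, e₁ ≠ e₂ → lt e₁ e₂ ∨ lt e₂ e₁) :
    Set.BijOn (pairVert G f hf lt) {e | IsNegEdge G lt e}
      {v : V | ∃ u : V, G.Reachable v u ∧ f u < f v} :=
  ⟨mapsTo_pairVert hf, injOn_pairVert hf hlt_trans hlt_total,
    surjOn_pairVert hf hlt_irrefl hlt_trans hlt_total⟩

/-- The elder-rule assignment `e ↦ m(e)` is a bijection from the set of
negative edges of `G` onto the set of vertices that are not the `f`-minimizing vertex of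
their connected component in `G`. -/
theorem elder_rule_bijection {V : Type*} [Fintype V]
    (G : SimpleGraph V) (f : V → ℝ) (hf : Function.Injective f)
    (lt : Sym2 V → Sym2 V → Prop)
    (hlt_irrefl : ∀ e ∈ G.edgeSet, ¬ lt e e)
    (hlt_trans : ∀ e₁ ∈ G.edgeSet, ∀ e₂ ∈ G.edgeSet, ∀ e₃ ∈ G.edgeSet,
      lt e₁ e₂ → lt e₂ e₃ → lt e₁ e₃)
    (hlt_total : ∀ e₁ ∈ G.edgeSet, ∀ e₂ ∈ G.edgeSet, e₁ ≠ e₂ → lt e₁ e₂ ∨ lt e₂ e₁)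
    (hlt_refine : ∀ e₁ ∈ G.edgeSet, ∀ e₂ ∈ G.edgeSet, fbar f e₁ < fbar f e₂ → lt e₁ e₂) :
    Set.BijOn (pairVert G f hf lt) {e | IsNegEdge G lt e}
      {v : V | ∃ u : V, G.Reachable v u ∧ f u < f v} :=
  elder_rule_bijection_general G f hf lt hlt_irrefl hlt_trans hlt_total
end

section
/- Under the noise model, let T be the spanning tree of G formed by all negative edges and let v₀ be the global f-minimum (which lies in S). Then for every vertex u ∈ S, every vertex of the unique path in T from u to v₀ belongs to S; hence the output graph of the reconstruction algorithm, being a union of such paths together with edges inside S, is contained in the ω-neighborhood. -/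
open SimpleGraph

/-!
If the tree path from `u ∈ S` to `v₀` left `S`, let `e` be its `≺`-largest edge. Some edge of the
path has an endpoint outside `S`, so its value is at least `-ν`, while every edge of `G[S]` has
value at most `-β < -ν`; hence all edges of `G[S]` precede `e`, and `u`, `v₀` are joined in
`G_{≺e}` through `S`. The rest of the path also lies in `G_{≺e}`, so the endpoints of `e` are
joined in `G_{≺e}`, contradicting the negativity of `e`.
-/

namespace List

theorem exists_forall_eq_or_rel_of_total {α : Type*} {r : α → α → Prop} {s : Set α}
    (htrans : ∀ a ∈ s, ∀ b ∈ s, ∀ c ∈ s, r a b → r b c → r a c)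
    (htotal : ∀ a ∈ s, ∀ b ∈ s, a ≠ b → r a b ∨ r b a) :
    ∀ {l : List α}, l ≠ [] → (∀ a ∈ l, a ∈ s) → ∃ m ∈ l, ∀ a ∈ l, a = m ∨ r a m
  | [], hne, _ => absurd rfl hne
  | [a], _, _ => ⟨a, mem_singleton_self a, fun b hb => .inl (mem_singleton.mp hb)⟩
  | a :: b :: l, _, hs => by
    obtain ⟨m, hm, hmax⟩ := exists_forall_eq_or_rel_of_total htrans htotal (cons_ne_nil b l)
      fun c hc => hs c (mem_cons_of_mem a hc)
    have has := hs a mem_cons_self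
    have hms := hs m (mem_cons_of_mem a hm)
    by_cases ham : a = m
    · exact ⟨m, mem_cons_of_mem a hm, forall_mem_cons.mpr ⟨.inl ham, hmax⟩⟩
    rcases htotal a has m hms ham with ham | hma
    · exact ⟨m, mem_cons_of_mem a hm, forall_mem_cons.mpr ⟨.inr ham, hmax⟩⟩
    · refine ⟨a, mem_cons_self, forall_mem_cons.mpr ⟨.inl rfl, fun c hc => .inr ?_⟩⟩
      rcases hmax c hc with rfl | hcm
      · exact hma
      · exact htrans c (hs c (mem_cons_of_mem a hc)) m hms a has hcm hma

end List

namespace SimpleGraph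

variable {V : Type*}

-- Deleting `s(x, y)` from the trail leaves walks in `H` joining `{u, v}` to both `x` and `y`.
theorem reachable_of_isTrail_of_mem_edges {H : SimpleGraph V} {u v x y : V}
    {p : (H ⊔ edge x y).Walk u v} (hp : p.IsTrail) (hxy : s(x, y) ∈ p.edges)
    (huv : H.Reachable u v) : H.Reachable x y := by
  have hle : (H ⊔ edge x y).deleteEdges {s(x, y)} ≤ H := by simp [edge]
  have hreach : ∀ {z w : V}, s(z, w) = s(x, y) → H.Reachable u w := by
    intro z w hzw
    rw [← hzw] at hle hxy
    by_contra h
    exact hp.not_mem_edges_of_not_reachable (fun r => h (r.mono hle))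
      (fun r => h (huv.trans (r.mono hle))) hxy
  exact (hreach Sym2.eq_swap).symm.trans (hreach rfl)

theorem reachable_of_induce_connected {G H : SimpleGraph V} {S : Set V}
    (hS : (G.induce S).Connected) (hGH : ∀ a ∈ S, ∀ b ∈ S, G.Adj a b → H.Adj a b)
    {u v : V} (hu : u ∈ S) (hv : v ∈ S) : H.Reachable u v :=
  (hS.preconnected ⟨u, hu⟩ ⟨v, hv⟩).map ⟨Subtype.val, fun {a b} hab => hGH a a.2 b b.2 hab⟩

variable {G : SimpleGraph V} {lt : Sym2 V → Sym2 V → Prop}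

theorem isNegEdge_of_mem_edges {u v : V} {e : Sym2 V}
    {p : (fromEdgeSet {e | IsNegEdge G lt e}).Walk u v} (he : e ∈ p.edges) :
    IsNegEdge G lt e := by
  have := p.edges_subset_edgeSet he
  rw [edgeSet_fromEdgeSet] at this
  exact this.1

theorem not_reachable_gbelow_of_isTrail {u v : V} {e : Sym2 V}
    {p : (fromEdgeSet {e | IsNegEdge G lt e}).Walk u v} (hp : p.IsTrail) (he : e ∈ p.edges)
    (hmax : ∀ e' ∈ p.edges, e' = e ∨ lt e' e) : ¬ (Gbelow G lt e).Reachable u v := by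
  obtain ⟨-, x, y, rfl, hxy⟩ := isNegEdge_of_mem_edges he
  have hsub : ∀ e' ∈ p.edges, e' ∈ (Gbelow G lt s(x, y) ⊔ edge x y).edgeSet := by
    intro e' he'
    have hG : e' ∈ G.edgeSet := (isNegEdge_of_mem_edges he').1
    rw [edgeSet_sup, Gbelow, edgeSet_fromEdgeSet, edgeSet_edge]
    rcases hmax e' he' with rfl | hlt
    · exact .inr ⟨rfl, G.not_isDiag_of_mem_edgeSet hG⟩
    · exact .inl ⟨⟨hG, hlt⟩, G.not_isDiag_of_mem_edgeSet hG⟩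
  have htrail : (p.transfer _ hsub).IsTrail := by
    rw [Walk.isTrail_def, Walk.edges_transfer]
    exact hp.edges_nodup
  exact fun huv => hxy (reachable_of_isTrail_of_mem_edges htrail (by rwa [Walk.edges_transfer]) huv)

end SimpleGraph

theorem fbar_mk {V : Type*} (f : V → ℝ) (u w : V) : fbar f s(u, w) = max (f u) (f w) := rfl

theorem le_fbar_of_mem {V : Type*} (f : V → ℝ) {e : Sym2 V} {x : V} (hx : x ∈ e) :
    f x ≤ fbar f e := by
  induction e with
  | h u w =>
    rcases Sym2.mem_iff.mp hx with rfl | rfl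
    · exact le_max_left _ _
    · exact le_max_right _ _

theorem tree_paths_stay_in_S_general {V : Type*}
    (G : SimpleGraph V) (f : V → ℝ)
    (lt : Sym2 V → Sym2 V → Prop)
    (hlt_trans : ∀ e₁ ∈ G.edgeSet, ∀ e₂ ∈ G.edgeSet, ∀ e₃ ∈ G.edgeSet,
      lt e₁ e₂ → lt e₂ e₃ → lt e₁ e₃)
    (hlt_total : ∀ e₁ ∈ G.edgeSet, ∀ e₂ ∈ G.edgeSet, e₁ ≠ e₂ → lt e₁ e₂ ∨ lt e₂ e₁)
    (hlt_refine : ∀ e₁ ∈ G.edgeSet, ∀ e₂ ∈ G.edgeSet, fbar f e₁ < fbar f e₂ → lt e₁ e₂)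
    (S : Set V) (β ν : ℝ) (hβν : 2 * ν < β)
    (hS : (G.induce S).Connected)
    (hfS : ∀ v ∈ S, f v ∈ Set.Icc (-β - ν) (-β))
    (hfSc : ∀ v : V, v ∉ S → f v ∈ Set.Icc (-ν) 0)
    (v₀ : V) (hv₀ : ∀ w : V, f v₀ ≤ f w) :
    v₀ ∈ S ∧
    ∀ u ∈ S,
      ∀ p : (SimpleGraph.fromEdgeSet {e | IsNegEdge G lt e}).Walk u v₀,
        p.IsPath → ∀ x ∈ p.support, x ∈ S := by
  have hv₀S : v₀ ∈ S := by
    obtain ⟨⟨s, hs⟩⟩ := hS.nonempty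
    by_contra h
    obtain ⟨hν, h0⟩ := hfSc v₀ h
    linarith [hv₀ s, (hfS s hs).2]
  refine ⟨hv₀S, fun u hu p hp x hx => ?_⟩
  by_contra hxS
  obtain ⟨e₀, he₀, hxe₀⟩ := (Walk.mem_support_iff_exists_mem_edges.mp hx).resolve_left
    (by rintro rfl; exact hxS hv₀S)
  have hedges : ∀ e ∈ p.edges, e ∈ G.edgeSet := fun e he => (isNegEdge_of_mem_edges he).1
  obtain ⟨e, he, hmax⟩ := List.exists_forall_eq_or_rel_of_total hlt_trans hlt_total
    (List.ne_nil_of_mem he₀) hedges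
  refine not_reachable_gbelow_of_isTrail hp.isTrail he hmax
    (reachable_of_induce_connected hS (fun a ha b hb hab => ?_) hu hv₀S)
  -- every edge inside `S` lies below the edge `e₀` leaving `S`, hence below `e`
  have habG : s(a, b) ∈ G.edgeSet := hab
  have hlt₀ : lt s(a, b) e₀ := hlt_refine _ habG _ (hedges e₀ he₀) <| by
    obtain ⟨hν, h0⟩ := hfSc x hxS
    linarith [le_fbar_of_mem f hxe₀, max_le (hfS a ha).2 (hfS b hb).2, fbar_mk f a b]
  rw [Gbelow, fromEdgeSet_adj]
  refine ⟨⟨habG, ?_⟩, hab.ne⟩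
  rcases hmax e₀ he₀ with rfl | h₀
  · exact hlt₀
  · exact hlt_trans _ habG _ (hedges e₀ he₀) _ (hedges e he) hlt₀ h₀

/-- Under the noise model, with `T` the spanning tree of all negative edges
and `v₀` the global `f`-minimum (which lies in `S`): for every `u ∈ S`, every vertex of the
unique path in `T` from `u` to `v₀` belongs to `S`. -/
theorem tree_paths_stay_in_S {V : Type*} [Fintype V]
    (G : SimpleGraph V) (f : V → ℝ) (hf : Function.Injective f)
    (lt : Sym2 V → Sym2 V → Prop)
    (hlt_irrefl : ∀ e ∈ G.edgeSet, ¬ lt e e)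
    (hlt_trans : ∀ e₁ ∈ G.edgeSet, ∀ e₂ ∈ G.edgeSet, ∀ e₃ ∈ G.edgeSet,
      lt e₁ e₂ → lt e₂ e₃ → lt e₁ e₃)
    (hlt_total : ∀ e₁ ∈ G.edgeSet, ∀ e₂ ∈ G.edgeSet, e₁ ≠ e₂ → lt e₁ e₂ ∨ lt e₂ e₁)
    (hlt_refine : ∀ e₁ ∈ G.edgeSet, ∀ e₂ ∈ G.edgeSet, fbar f e₁ < fbar f e₂ → lt e₁ e₂)
    (S : Set V) (β ν : ℝ) (hβν : 2 * ν < β) (hν : 0 ≤ ν)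
    (hG : G.Connected) (hS : (G.induce S).Connected)
    (hfS : ∀ v ∈ S, f v ∈ Set.Icc (-β - ν) (-β))
    (hfSc : ∀ v : V, v ∉ S → f v ∈ Set.Icc (-ν) 0)
    (v₀ : V) (hv₀ : ∀ w : V, f v₀ ≤ f w) :
    v₀ ∈ S ∧
    ∀ u ∈ S,
      ∀ p : (SimpleGraph.fromEdgeSet {e | IsNegEdge G lt e}).Walk u v₀,
        p.IsPath → ∀ x ∈ p.support, x ∈ S :=
  tree_paths_stay_in_S_general G f lt hlt_trans hlt_total hlt_refine S β ν hβν hS hfS hfSc v₀ hv₀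
end

section
/- Let G be a finite simple graph, an edge of G being called a 'cycle edge' if some cycle of G traverses it, and let C be the set of cycle edges of G. Then a set H of edges of G satisfies 'deleting H eliminates no cycle' — i.e., every edge that lies on a cycle of G also lies on a cycle of the graph G − H obtained by deleting the edges of H — if and only if H ∩ C = ∅. Consequently E(G) \ C is the unique maximal such set H, and the resulting graph G − (E(G) \ C) is unique with edge set exactly C, and every edge of this graph lies on a cycle of this graph itself. -/
open SimpleGraph

def OnCycle {V : Type*} (G : SimpleGraph V) (e : Sym2 V) : Prop :=
  ∃ (v : V) (c : G.Walk v v), c.IsCycle ∧ e ∈ c.edges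

namespace OnCycle

variable {V : Type*} {G : SimpleGraph V} {e : Sym2 V}

lemma mem_edgeSet (h : OnCycle G e) : e ∈ G.edgeSet := by
  obtain ⟨v, c, -, he⟩ := h
  exact c.edges_subset_edgeSet he

lemma deleteEdges {H : Set (Sym2 V)} (hH : Disjoint H {e | OnCycle G e}) (h : OnCycle G e) :
    OnCycle (G.deleteEdges H) e := by
  obtain ⟨v, c, hc, hec⟩ := h
  -- every edge of `c` is itself a cycle edge, so the whole cycle `c` avoids `H`
  have hcH : ∀ f ∈ c.edges, f ∉ H := fun f hf hfH =>
    Set.disjoint_left.mp hH hfH ⟨v, c, hc, hf⟩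
  exact ⟨v, c.toDeleteEdges H hcH, hc.transfer _, by rwa [Walk.edges_transfer]⟩

lemma notMem_of_deleteEdges {H : Set (Sym2 V)} (h : OnCycle (G.deleteEdges H) e) : e ∉ H :=
  (edgeSet_deleteEdges H ▸ h.mem_edgeSet).2

end OnCycle

section

variable {V : Type*} {G : SimpleGraph V}

lemma forall_onCycle_deleteEdges_iff_disjoint {H : Set (Sym2 V)} :
    (∀ e, OnCycle G e → OnCycle (G.deleteEdges H) e) ↔ Disjoint H {e | OnCycle G e} :=
  ⟨fun hpres => Set.disjoint_right.mpr fun _ he => (hpres _ he).notMem_of_deleteEdges,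
    fun hH _ => OnCycle.deleteEdges hH⟩

lemma edgeSet_deleteEdges_diff_onCycle :
    (G.deleteEdges (G.edgeSet \ {e | OnCycle G e})).edgeSet = {e | OnCycle G e} := by
  rw [edgeSet_deleteEdges, sdiff_sdiff_right_self,
    inf_eq_right.mpr fun _ he => OnCycle.mem_edgeSet he]

end

theorem delete_edges_preserves_cycles_iff_general {V : Type*} (G : SimpleGraph V) :
    (∀ H ⊆ G.edgeSet,
      ((∀ e : Sym2 V, OnCycle G e → OnCycle (G.deleteEdges H) e) ↔
        H ∩ {e : Sym2 V | OnCycle G e} = ∅)) ∧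
    (∀ H ⊆ G.edgeSet,
      (∀ e : Sym2 V, OnCycle G e → OnCycle (G.deleteEdges H) e) →
        H ⊆ G.edgeSet \ {e : Sym2 V | OnCycle G e}) ∧
    (G.deleteEdges (G.edgeSet \ {e : Sym2 V | OnCycle G e})).edgeSet =
      {e : Sym2 V | OnCycle G e} ∧
    (∀ e ∈ (G.deleteEdges (G.edgeSet \ {e : Sym2 V | OnCycle G e})).edgeSet,
      OnCycle (G.deleteEdges (G.edgeSet \ {e : Sym2 V | OnCycle G e})) e) := by
  refine ⟨fun H _ => ?_, fun H hHE hpres => ?_, edgeSet_deleteEdges_diff_onCycle, fun e he => ?_⟩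
  · rw [forall_onCycle_deleteEdges_iff_disjoint, Set.disjoint_iff_inter_eq_empty]
  · exact Set.subset_sdiff.mpr ⟨hHE, forall_onCycle_deleteEdges_iff_disjoint.mp hpres⟩
  · rw [edgeSet_deleteEdges_diff_onCycle] at he
    exact OnCycle.deleteEdges disjoint_sdiff_self_left he

/-- For a set `H` of edges of `G`, deleting `H` eliminates no cycle iff `H`
is disjoint from the set `C` of cycle edges of `G`. Consequently `E(G) \ C` is the unique
maximal such set, the graph `G − (E(G) \ C)` has edge set exactly `C`, and every edge of this
graph lies on a cycle of this graph itself. -/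
theorem delete_edges_preserves_cycles_iff {V : Type*} [Fintype V] (G : SimpleGraph V) :
    (∀ H ⊆ G.edgeSet,
      ((∀ e : Sym2 V, OnCycle G e → OnCycle (G.deleteEdges H) e) ↔
        H ∩ {e : Sym2 V | OnCycle G e} = ∅)) ∧
    (∀ H ⊆ G.edgeSet,
      (∀ e : Sym2 V, OnCycle G e → OnCycle (G.deleteEdges H) e) →
        H ⊆ G.edgeSet \ {e : Sym2 V | OnCycle G e}) ∧
    (G.deleteEdges (G.edgeSet \ {e : Sym2 V | OnCycle G e})).edgeSet =
      {e : Sym2 V | OnCycle G e} ∧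
    (∀ e ∈ (G.deleteEdges (G.edgeSet \ {e : Sym2 V | OnCycle G e})).edgeSet,
      OnCycle (G.deleteEdges (G.edgeSet \ {e : Sym2 V | OnCycle G e})) e) :=
  delete_edges_preserves_cycles_iff_general G
end
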